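/- Define ℰ_n = −∫_0^∞ (2y/sinh³(y))·(∫_0^y t·sinh(t)/(t² + π²n²) dt) dy for n ≠ 0, and ℰ_0 = ∫_0^∞ (2y/sinh³(y))·(sinh(y) − ∫_0^y (sinh(t)/t) dt) dy. Then ℰ_0 > 0, ℰ_n < 0 for n ≠ 0, the sequence (ℰ_n)_{n∈ℤ} is absolutely summable, and ∑_{n∈ℤ} ℰ_n = 0. -/

import Mathlib

/-!
The Mittag-Leffler expansion of `cot` at an imaginary point gives, for `t ≠ 0`,
`∑_{n ∈ ℤ} t sinh t / (t² + π² n²) = cosh t`, and its `n = 0` term is `sinh t / t`. Integrating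
over `[0, y]`, the inner integrals `K_n(y)` of all the `ℰ_n` sum to `sinh y`. Hence
`ℰ_n = ∫_0^∞ w(y) (δ_{n0} sinh y - K_n(y)) dy` with `w(y) = 2y / sinh³ y` for every `n`, and
these integrands sum to zero for each `y`. Since `K_n(y) ≤ y² sinh y / (π² n²)` for `n ≠ 0` and
`y³ / sinh² y ≤ 4 y e^{-y}` is integrable, both exchanges of sum and integral converge
absolutely, giving `∑ |ℰ_n| < ∞` and `∑ ℰ_n = 0`. All `K_n(y)` are positive, which gives the
signs; for `n = 0` the positive `n = 1` term of the series shows `K_0(y) < sinh y`.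
-/

open Real MeasureTheory

/-- The kernel `ℰ_n` from Lemma 3.11. -/
noncomputable def E (n : ℤ) : ℝ :=
  if n = 0 then
    ∫ y in Set.Ioi (0 : ℝ),
      (2 * y / Real.sinh y ^ 3) * (Real.sinh y - ∫ t in (0 : ℝ)..y, Real.sinh t / t)
  else
    -∫ y in Set.Ioi (0 : ℝ),
      (2 * y / Real.sinh y ^ 3) *
        ∫ t in (0 : ℝ)..y, t * Real.sinh t / (t ^ 2 + π ^ 2 * n ^ 2)

open Set

lemma hasSum_integral_of_ae_hasSum {α ι F : Type*} [MeasurableSpace α] {μ : Measure α}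
    [Countable ι] [NormedAddCommGroup F] [NormedSpace ℝ F] {f : ι → α → F} {g : α → F}
    (hf_int : ∀ i, Integrable (f i) μ) (hf_sum : Summable fun i => ∫ a, ‖f i a‖ ∂μ)
    (hfg : ∀ᵐ a ∂μ, HasSum (fun i => f i a) (g a)) :
    HasSum (fun i => ∫ a, f i a ∂μ) (∫ a, g a ∂μ) := by
  rw [integral_congr_ae (hfg.mono fun a ha => ha.tsum_eq.symm)]
  exact hasSum_integral_of_summable_integral_norm hf_int hf_sum

lemma setIntegral_Ioi_pos {f : ℝ → ℝ} {a : ℝ} (hfi : IntegrableOn f (Ioi a))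
    (hf : ∀ x ∈ Ioi a, 0 < f x) : 0 < ∫ x in Ioi a, f x := by
  rw [setIntegral_pos_iff_support_of_nonneg_ae
    (ae_restrict_of_forall_mem measurableSet_Ioi fun x hx => (hf x hx).le) hfi,
    show Function.support f ∩ Ioi a = Ioi a from inter_eq_right.2 fun x hx => (hf x hx).ne',
    volume_Ioi]
  exact ENNReal.zero_lt_top

lemma integral_cosh (a b : ℝ) : ∫ t in a..b, cosh t = sinh b - sinh a :=
  intervalIntegral.integral_eq_sub_of_hasDerivAt (fun t _ => hasDerivAt_sinh t)
    (continuous_cosh.intervalIntegrable _ _)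

lemma integral_sinh (a b : ℝ) : ∫ t in a..b, sinh t = cosh b - cosh a :=
  intervalIntegral.integral_eq_sub_of_hasDerivAt (fun t _ => hasDerivAt_cosh t)
    (continuous_sinh.intervalIntegrable _ _)

lemma cosh_sub_one_le_mul_sinh {y : ℝ} (hy : 0 ≤ y) : cosh y - 1 ≤ y * sinh y :=
  calc cosh y - 1 = ∫ t in (0 : ℝ)..y, sinh t := by rw [integral_sinh, cosh_zero]
    _ ≤ ∫ t in (0 : ℝ)..y, sinh y :=
      intervalIntegral.integral_mono_on hy (continuous_sinh.intervalIntegrable _ _)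
        intervalIntegrable_const fun t ht => sinh_le_sinh.2 ht.2
    _ = y * sinh y := by simp

lemma mul_exp_half_le_two_mul_sinh {y : ℝ} (hy : 0 ≤ y) : y * exp (y / 2) ≤ 2 * sinh y := by
  have hsinh : y / 2 ≤ sinh (y / 2) := self_le_sinh_iff.2 (by linarith)
  have hcosh : exp (y / 2) ≤ 2 * cosh (y / 2) := by
    rw [cosh_eq]; linarith [exp_pos (-(y / 2))]
  calc y * exp (y / 2) ≤ (2 * sinh (y / 2)) * (2 * cosh (y / 2)) := by
        gcongr; linarith
    _ = 2 * sinh (2 * (y / 2)) := by rw [sinh_two_mul]; ring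
    _ = 2 * sinh y := by ring_nf

lemma cube_div_sinh_sq_le {y : ℝ} (hy : 0 < y) : y ^ 3 / sinh y ^ 2 ≤ 4 * (exp (-y) * y) := by
  have hsinh := mul_exp_half_le_two_mul_sinh hy.le
  have hexp : exp (y / 2) ^ 2 * exp (-y) = 1 := by
    rw [← exp_nat_mul, ← exp_add, show ((2 : ℕ) : ℝ) * (y / 2) + -y = 0 by push_cast; ring,
      exp_zero]
  rw [div_le_iff₀ (by have := sinh_pos_iff.2 hy; positivity)]
  calc y ^ 3 = y * exp (-y) * (y * exp (y / 2)) ^ 2 := by linear_combination (-y ^ 3) * hexp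
    _ ≤ y * exp (-y) * (2 * sinh y) ^ 2 := by gcongr
    _ = 4 * (exp (-y) * y) * sinh y ^ 2 := by ring

lemma integrableOn_cube_div_sinh_sq : IntegrableOn (fun y => y ^ 3 / sinh y ^ 2) (Ioi 0) := by
  have hΓ : IntegrableOn (fun y => exp (-y) * y) (Ioi 0) := by
    have := GammaIntegral_convergent two_pos
    norm_num at this
    exact this
  refine (hΓ.const_mul 4).mono'
    (by fun_prop : Measurable fun y : ℝ => y ^ 3 / sinh y ^ 2).aestronglyMeasurable ?_
  filter_upwards [ae_restrict_mem measurableSet_Ioi] with y (hy : 0 < y)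
  rw [norm_of_nonneg (by positivity)]
  exact cube_div_sinh_sq_le hy

lemma summable_of_abs_le_div_sq {f : ℤ → ℝ} (C : ℝ) (h : ∀ n ≠ 0, |f n| ≤ C / n ^ 2) :
    Summable f :=
  .of_norm_bounded_eventually ((summable_one_div_int_pow.mpr one_lt_two).mul_left C) <| by
    filter_upwards [Filter.eventually_cofinite_ne 0] with n hn
    simpa [div_eq_mul_inv] using h n hn

lemma summable_div_sq_add_pi_sq_mul_sq (t : ℝ) :
    Summable fun n : ℤ => t / (t ^ 2 + π ^ 2 * n ^ 2) :=
  summable_of_abs_le_div_sq (|t| / π ^ 2) fun n hn => by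
    have hpos : (0 : ℝ) < π ^ 2 * n ^ 2 := by positivity
    rw [abs_div, abs_of_pos (add_pos_of_nonneg_of_pos (sq_nonneg t) hpos), div_div]
    exact div_le_div_of_nonneg_left (abs_nonneg t) hpos (le_add_of_nonneg_left (sq_nonneg t))

open Complex in
/-- The Mittag-Leffler expansion of `cot` at the imaginary point `x = i t / π`. -/
lemma hasSum_div_sq_add_pi_sq_mul_sq {t : ℝ} (ht : t ≠ 0) :
    HasSum (fun n : ℤ => t / (t ^ 2 + π ^ 2 * n ^ 2)) (Real.cosh t / Real.sinh t) := by
  set g : ℤ → ℝ := fun n => t / (t ^ 2 + π ^ 2 * n ^ 2)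
  have hg : Summable g := summable_div_sq_add_pi_sq_mul_sq t
  have heven : g.Even := fun n => by simp [g]
  set x : ℂ := ((t / π : ℝ) : ℂ) * I
  have hπx : (π : ℂ) * x = t * I := by simp [x]; field_simp
  have hx : x ∈ integerComplement := by
    rintro ⟨n, hn⟩
    have := congrArg Complex.im hn
    simp [x] at this
    exact div_ne_zero ht pi_ne_zero this.symm
  have hcot := cot_series_rep hx
  have hl : (π : ℂ) * cot (π * x) = ((Real.cosh t / Real.sinh t : ℝ) : ℂ) * -(π * I) := by
    rw [hπx, Complex.cot_eq_cos_div_sin, cos_mul_I, sin_mul_I]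
    push_cast
    field_simp
    simp [I_sq, neg_div]
  have h0 : 1 / x = ((g 0 : ℝ) : ℂ) * -(π * I) := by
    simp only [g, x]
    push_cast
    field_simp
    simp [I_sq]
    field_simp
  have hn : ∀ n : ℕ+, 1 / (x - n) + 1 / (x + n) = ((2 * g n : ℝ) : ℂ) * -(π * I) := by
    intro n
    have hsum : ((t ^ 2 + π ^ 2 * n ^ 2 : ℝ) : ℂ) ≠ 0 := by
      exact_mod_cast (by positivity : (0 : ℝ) < t ^ 2 + π ^ 2 * n ^ 2).ne'
    have hsub : (t : ℂ) * I - π * n ≠ 0 := fun h => ht (by simpa using congrArg Complex.im h)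
    have hadd : (t : ℂ) * I + π * n ≠ 0 := fun h => ht (by simpa using congrArg Complex.im h)
    simp only [g, x]
    push_cast at hsum ⊢
    field_simp
    linear_combination (2 * t ^ 3 * I) * I_sq
  rw [hl, h0, tsum_congr hn, tsum_mul_right, ← add_mul, ← ofReal_tsum, ← ofReal_add] at hcot
  have hcoth : Real.cosh t / Real.sinh t = g 0 + ∑' n : ℕ+, 2 * g n :=
    ofReal_injective (mul_right_cancel₀ (by simp [pi_ne_zero]) hcot)
  rw [hg.hasSum_iff, tsum_int_eq_zero_add_two_mul_tsum_pnat heven hg, hcoth, tsum_mul_left,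
    nsmul_eq_mul]
  push_cast
  ring

namespace E

noncomputable def kernel (n : ℤ) (t : ℝ) : ℝ := t * sinh t / (t ^ 2 + π ^ 2 * n ^ 2)

noncomputable def primitive (n : ℤ) (y : ℝ) : ℝ := ∫ t in (0 : ℝ)..y, kernel n t

noncomputable def weight (y : ℝ) : ℝ := 2 * y / sinh y ^ 3

/-- Since `kernel 0 t = sinh t / t`, this integrand gives `E n` for `n = 0` as well. -/
noncomputable def integrand (n : ℤ) (y : ℝ) : ℝ :=
  weight y * ((if n = 0 then sinh y else 0) - primitive n y)

lemma kernel_zero (t : ℝ) : kernel 0 t = sinh t / t := by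
  rcases eq_or_ne t 0 with rfl | ht
  · simp [kernel]
  · simp [kernel]
    field_simp

lemma kernel_neg (n : ℤ) (t : ℝ) : kernel n (-t) = kernel n t := by
  simp [kernel]

lemma kernel_pos (n : ℤ) {t : ℝ} (ht : 0 < t) : 0 < kernel n t :=
  div_pos (mul_pos ht (sinh_pos_iff.2 ht)) (by positivity)

lemma hasSum_kernel {t : ℝ} (ht : t ≠ 0) : HasSum (fun n => kernel n t) (cosh t) := by
  have h := (hasSum_div_sq_add_pi_sq_mul_sq ht).mul_right (sinh t)
  rw [div_mul_cancel₀ _ (sinh_ne_zero.2 ht)] at h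
  simpa only [kernel, div_mul_eq_mul_div] using h

lemma kernel_le_cosh (n : ℤ) {t : ℝ} (ht : 0 < t) : kernel n t ≤ cosh t :=
  le_hasSum (hasSum_kernel ht.ne') n fun m _ => (kernel_pos m ht).le

lemma abs_kernel_le_cosh (n : ℤ) (t : ℝ) : |kernel n t| ≤ cosh t := by
  rcases lt_trichotomy t 0 with ht | rfl | ht
  · rw [← kernel_neg, ← cosh_neg, abs_of_pos (kernel_pos n (neg_pos.2 ht))]
    exact kernel_le_cosh n (neg_pos.2 ht)
  · simp [kernel]
  · rw [abs_of_pos (kernel_pos n ht)]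
    exact kernel_le_cosh n ht

lemma one_le_kernel_zero {t : ℝ} (ht : 0 < t) : 1 ≤ kernel 0 t := by
  rw [kernel_zero, le_div_iff₀ ht, one_mul]
  exact self_le_sinh_iff.2 ht.le

lemma kernel_le_of_ne_zero {n : ℤ} (hn : n ≠ 0) {t y : ℝ} (ht : 0 ≤ t) (hty : t ≤ y) :
    kernel n t ≤ y * sinh y / π ^ 2 / n ^ 2 := by
  have hn2 : (0 : ℝ) < π ^ 2 * n ^ 2 := by positivity
  calc kernel n t ≤ t * sinh t / (π ^ 2 * n ^ 2) :=
        div_le_div_of_nonneg_left (mul_nonneg ht (sinh_nonneg_iff.2 ht)) hn2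
          (le_add_of_nonneg_left (sq_nonneg t))
    _ ≤ y * sinh y / (π ^ 2 * n ^ 2) := div_le_div_of_nonneg_right
        (mul_le_mul hty (sinh_le_sinh.2 hty) (sinh_nonneg_iff.2 ht) (ht.trans hty)) hn2.le
    _ = y * sinh y / π ^ 2 / n ^ 2 := by rw [div_div]

lemma intervalIntegrable_kernel (n : ℤ) (a b : ℝ) : IntervalIntegrable (kernel n) volume a b :=
  (continuous_cosh.intervalIntegrable a b).mono_fun'
    (by unfold kernel; fun_prop : Measurable (kernel n)).aestronglyMeasurable
    (Filter.Eventually.of_forall (abs_kernel_le_cosh n))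

lemma continuous_primitive (n : ℤ) : Continuous (primitive n) :=
  intervalIntegral.continuous_primitive (intervalIntegrable_kernel n) 0

lemma primitive_zero (y : ℝ) : primitive 0 y = ∫ t in (0 : ℝ)..y, sinh t / t := by
  simp only [primitive, kernel_zero]

lemma primitive_pos (n : ℤ) {y : ℝ} (hy : 0 < y) : 0 < primitive n y :=
  intervalIntegral.intervalIntegral_pos_of_pos_on (intervalIntegrable_kernel n 0 y)
    (fun _ ht => kernel_pos n ht.1) hy

lemma primitive_le_of_ne_zero {n : ℤ} (hn : n ≠ 0) {y : ℝ} (hy : 0 ≤ y) :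
    primitive n y ≤ y ^ 2 * sinh y / π ^ 2 / n ^ 2 :=
  calc primitive n y ≤ ∫ t in (0 : ℝ)..y, y * sinh y / π ^ 2 / n ^ 2 :=
        intervalIntegral.integral_mono_on hy (intervalIntegrable_kernel n 0 y)
          intervalIntegrable_const fun t ht => kernel_le_of_ne_zero hn ht.1 ht.2
    _ = y ^ 2 * sinh y / π ^ 2 / n ^ 2 := by simp; ring

lemma hasSum_primitive {y : ℝ} (hy : 0 ≤ y) : HasSum (fun n => primitive n y) (sinh y) := by
  have hbound (n : ℤ) (hn : n ≠ 0) :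
      |∫ t in Ioc 0 y, ‖kernel n t‖| ≤ y ^ 2 * sinh y / π ^ 2 / n ^ 2 := by
    rw [← Real.norm_eq_abs]
    refine (norm_setIntegral_le_of_norm_le_const (C := y * sinh y / π ^ 2 / n ^ 2)
      measure_Ioc_lt_top fun t ht => ?_).trans_eq ?_
    · rw [norm_norm, Real.norm_of_nonneg (kernel_pos n ht.1).le]
      exact kernel_le_of_ne_zero hn ht.1.le ht.2
    · rw [Real.volume_real_Ioc_of_le hy]; ring
  have := hasSum_integral_of_ae_hasSum (fun n => (intervalIntegrable_kernel n 0 y).1)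
    (summable_of_abs_le_div_sq _ hbound)
    (ae_restrict_of_forall_mem measurableSet_Ioc fun t ht => hasSum_kernel ht.1.ne')
  have hcosh : ∫ t in Ioc 0 y, cosh t = sinh y := by
    rw [← intervalIntegral.integral_of_le hy, integral_cosh, sinh_zero, sub_zero]
  rw [hcosh] at this
  simpa only [primitive, intervalIntegral.integral_of_le hy] using this

lemma primitive_zero_lt_sinh {y : ℝ} (hy : 0 < y) : primitive 0 y < sinh y :=
  lt_hasSum (hasSum_primitive hy.le) 0 (fun n _ => (primitive_pos n hy).le) 1 one_ne_zero
    (primitive_pos 1 hy)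

lemma sinh_sub_primitive_zero_le {y : ℝ} (hy : 0 ≤ y) :
    sinh y - primitive 0 y ≤ y ^ 2 * sinh y :=
  calc sinh y - primitive 0 y = ∫ t in (0 : ℝ)..y, (cosh t - kernel 0 t) := by
        rw [intervalIntegral.integral_sub (continuous_cosh.intervalIntegrable _ _)
          (intervalIntegrable_kernel 0 0 y), integral_cosh, sinh_zero, sub_zero, primitive]
    _ ≤ ∫ t in (0 : ℝ)..y, (cosh y - 1) := by
        refine intervalIntegral.integral_mono_on_of_le_Ioo hy
          ((continuous_cosh.intervalIntegrable _ _).sub (intervalIntegrable_kernel 0 0 y))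
          intervalIntegrable_const fun t ht => ?_
        have : cosh t ≤ cosh y := by
          rw [cosh_le_cosh, abs_of_pos ht.1, abs_of_nonneg hy]; exact ht.2.le
        linarith [one_le_kernel_zero ht.1]
    _ = y * (cosh y - 1) := by simp; ring
    _ ≤ y * (y * sinh y) := by gcongr; exact cosh_sub_one_le_mul_sinh hy
    _ = y ^ 2 * sinh y := by ring

lemma weight_pos {y : ℝ} (hy : 0 < y) : 0 < weight y := by
  have := sinh_pos_iff.2 hy
  unfold weight
  positivity

lemma weight_mul_sq_mul_sinh {y : ℝ} (hy : 0 < y) :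
    weight y * (y ^ 2 * sinh y) = 2 * (y ^ 3 / sinh y ^ 2) := by
  unfold weight
  field_simp [(sinh_pos_iff.2 hy).ne']

lemma integrand_of_ne_zero {n : ℤ} (hn : n ≠ 0) (y : ℝ) :
    integrand n y = -(weight y * primitive n y) := by
  simp [integrand, hn]

lemma integrand_zero_pos {y : ℝ} (hy : 0 < y) : 0 < integrand 0 y :=
  mul_pos (weight_pos hy) (by simpa using primitive_zero_lt_sinh hy)

lemma integrand_neg_of_ne_zero {n : ℤ} (hn : n ≠ 0) {y : ℝ} (hy : 0 < y) :
    integrand n y < 0 := by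
  rw [integrand_of_ne_zero hn]
  exact neg_neg_of_pos (mul_pos (weight_pos hy) (primitive_pos n hy))

lemma abs_integrand_zero_le {y : ℝ} (hy : 0 < y) :
    |integrand 0 y| ≤ 2 * (y ^ 3 / sinh y ^ 2) := by
  rw [abs_of_pos (integrand_zero_pos hy), ← weight_mul_sq_mul_sinh hy, integrand, if_pos rfl]
  exact mul_le_mul_of_nonneg_left (sinh_sub_primitive_zero_le hy.le) (weight_pos hy).le

lemma abs_integrand_le_of_ne_zero {n : ℤ} (hn : n ≠ 0) {y : ℝ} (hy : 0 < y) :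
    |integrand n y| ≤ 2 * (y ^ 3 / sinh y ^ 2) / π ^ 2 / n ^ 2 := by
  rw [abs_of_neg (integrand_neg_of_ne_zero hn hy), integrand_of_ne_zero hn, neg_neg,
    ← weight_mul_sq_mul_sinh hy]
  calc weight y * primitive n y ≤ weight y * (y ^ 2 * sinh y / π ^ 2 / n ^ 2) :=
        mul_le_mul_of_nonneg_left (primitive_le_of_ne_zero hn hy.le) (weight_pos hy).le
    _ = _ := by ring

lemma measurable_integrand (n : ℤ) : Measurable (integrand n) := by
  have := (continuous_primitive n).measurable
  unfold integrand weight
  split_ifs <;> fun_prop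

lemma integrableOn_integrand (n : ℤ) : IntegrableOn (integrand n) (Ioi 0) := by
  obtain ⟨C, hC⟩ : ∃ C, ∀ y > 0, |integrand n y| ≤ C * (y ^ 3 / sinh y ^ 2) := by
    rcases eq_or_ne n 0 with rfl | hn
    · exact ⟨2, fun y hy => abs_integrand_zero_le hy⟩
    · exact ⟨2 / π ^ 2 / n ^ 2, fun y hy =>
        (abs_integrand_le_of_ne_zero hn hy).trans_eq (by ring)⟩
  refine (integrableOn_cube_div_sinh_sq.const_mul C).mono'
    (measurable_integrand n).aestronglyMeasurable ?_
  filter_upwards [ae_restrict_mem measurableSet_Ioi] with y hy using hC y hy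

lemma integral_abs_integrand_le {n : ℤ} (hn : n ≠ 0) :
    ∫ y in Ioi 0, |integrand n y| ≤ 2 * (∫ y in Ioi 0, y ^ 3 / sinh y ^ 2) / π ^ 2 / n ^ 2 :=
  calc ∫ y in Ioi 0, |integrand n y|
        ≤ ∫ y in Ioi 0, 2 * (y ^ 3 / sinh y ^ 2) / π ^ 2 / n ^ 2 :=
        setIntegral_mono_on (integrableOn_integrand n).abs
          (((integrableOn_cube_div_sinh_sq.const_mul 2).div_const _).div_const _)
          measurableSet_Ioi fun y hy => abs_integrand_le_of_ne_zero hn hy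
    _ = _ := by rw [integral_div, integral_div, integral_const_mul]

lemma hasSum_integrand {y : ℝ} (hy : 0 < y) : HasSum (fun n => integrand n y) 0 := by
  simpa [integrand] using
    ((hasSum_ite_eq 0 (sinh y)).sub (hasSum_primitive hy.le)).mul_left (weight y)

lemma summable_integral_abs_integrand : Summable fun n => ∫ y in Ioi 0, |integrand n y| :=
  summable_of_abs_le_div_sq (2 * (∫ y in Ioi 0, y ^ 3 / sinh y ^ 2) / π ^ 2) fun n hn => by
    rw [abs_of_nonneg (integral_nonneg fun _ => abs_nonneg _)]
    exact integral_abs_integrand_le hn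

lemma hasSum_integral_integrand : HasSum (fun n => ∫ y in Ioi 0, integrand n y) 0 := by
  simpa using hasSum_integral_of_ae_hasSum integrableOn_integrand
    (by simpa only [Real.norm_eq_abs] using summable_integral_abs_integrand)
    (ae_restrict_of_forall_mem measurableSet_Ioi fun y hy => hasSum_integrand hy)

lemma E_eq_integral (n : ℤ) : E n = ∫ y in Ioi 0, integrand n y := by
  unfold E
  split_ifs with hn
  · subst hn
    simp [integrand, primitive_zero, weight]
  · simp [integrand_of_ne_zero hn, integral_neg, weight, primitive, kernel]

end E

theorem E_properties :
    IntegrableOn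
        (fun y => (2 * y / Real.sinh y ^ 3) *
          (Real.sinh y - ∫ t in (0 : ℝ)..y, Real.sinh t / t)) (Set.Ioi 0) ∧
      (∀ n : ℤ, n ≠ 0 →
        IntegrableOn
          (fun y => (2 * y / Real.sinh y ^ 3) *
            ∫ t in (0 : ℝ)..y, t * Real.sinh t / (t ^ 2 + π ^ 2 * n ^ 2)) (Set.Ioi 0)) ∧
      0 < E 0 ∧ (∀ n : ℤ, n ≠ 0 → E n < 0) ∧
      Summable (fun n : ℤ => |E n|) ∧ HasSum E 0 := by
  refine ⟨?_, fun n hn => ?_, ?_, fun n hn => ?_, ?_, ?_⟩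
  · refine (E.integrableOn_integrand 0).congr_fun (fun y _ => ?_) measurableSet_Ioi
    simp [E.integrand, E.primitive_zero, E.weight]
  · refine (E.integrableOn_integrand n).neg.congr_fun (fun y _ => ?_) measurableSet_Ioi
    simp [E.integrand_of_ne_zero hn, E.weight, E.primitive, E.kernel]
  · rw [E.E_eq_integral]
    exact setIntegral_Ioi_pos (E.integrableOn_integrand 0) fun y hy => E.integrand_zero_pos hy
  · rw [E.E_eq_integral, ← neg_pos, ← integral_neg]
    exact setIntegral_Ioi_pos (E.integrableOn_integrand n).neg
      fun y hy => neg_pos.2 (E.integrand_neg_of_ne_zero hn hy)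
  · refine E.summable_integral_abs_integrand.of_nonneg_of_le (fun n => abs_nonneg _) fun n => ?_
    rw [E.E_eq_integral]
    exact abs_integral_le_integral_abs
  · rw [show E = _ from funext E.E_eq_integral]
    exact E.hasSum_integral_integrand
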